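/- Let W be a k-wheel and T a coupled spanning tree of W, and define the type of a chord v_i v_{i+1} to be the pair (val_T(v_i), val_T(v_{i+1})) and the type of a radius v₀v_i to be (val_T(v_{i-1}), val_T(v_{i+1})). Then every type-(2,2) chord belongs to T, every type-(1,1) chord belongs to the complement of T, every type-(2,2) radius belongs to the complement of T, and every type-(1,1) radius belongs to T. -/
import Mathlib


/-- The edge set of the `k`-wheel: center `none`, spokes `some i`, `i : ZMod k`. -/
def wheelEdges (k : ℕ) : Set (Sym2 (Option (ZMod k))) :=
  {e | ∃ i : ZMod k, e = s(none, some i) ∨ e = s(some i, some (i + 1))}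

/-- `T` is a coupled spanning tree of the `k`-wheel. -/
def IsCoupledTree (k : ℕ) (T : Set (Sym2 (Option (ZMod k)))) : Prop :=
  T ⊆ wheelEdges k ∧ (SimpleGraph.fromEdgeSet T).IsTree ∧
    (SimpleGraph.fromEdgeSet (wheelEdges k \ T)).IsTree

/-- The valence of a vertex `x` with respect to an edge set `T`. -/
noncomputable def valOf {k : ℕ} (T : Set (Sym2 (Option (ZMod k))))
    (x : Option (ZMod k)) : ℕ :=
  {e ∈ T | x ∈ e}.ncard

open SimpleGraph

private lemma walk_closed {V : Type*} {G : SimpleGraph V} {S : Set V}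
    (hS : ∀ u ∈ S, ∀ w, G.Adj u w → w ∈ S) :
    ∀ {u v : V}, G.Walk u v → u ∈ S → v ∈ S
  | _, _, .nil, hu => hu
  | _, _, .cons h p, hu => walk_closed hS p (hS _ hu _ h)

open scoped Classical in
private lemma ncard_inter_triple {α : Type*} (T : Set α) (a b c : α)
    (hab : a ≠ b) (hac : a ≠ c) (hbc : b ≠ c) :
    (T ∩ {a, b, c}).ncard =
      (if a ∈ T then 1 else 0) + (if b ∈ T then 1 else 0) + (if c ∈ T then 1 else 0) := by
  classical
  have h : (T ∩ {a, b, c}) = ((({a, b, c} : Finset α).filter (· ∈ T)) : Set α) := by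
    ext x; simp [and_comm]
  rw [h, Set.ncard_coe_finset, Finset.card_filter]
  rw [show ({a, b, c} : Finset α) = insert a (insert b {c}) from rfl]
  rw [Finset.sum_insert (by simp [hab, hac]), Finset.sum_insert (by simp [hbc]),
    Finset.sum_singleton]
  ring

/-- Radius edge. -/
private def Rr (k : ℕ) (j : ZMod k) : Sym2 (Option (ZMod k)) := s(none, some j)

/-- Chord edge. -/
private def Cc (k : ℕ) (j : ZMod k) : Sym2 (Option (ZMod k)) := s(some j, some (j + 1))

private lemma Rr_mem_wheel (k : ℕ) (j : ZMod k) : Rr k j ∈ wheelEdges k := ⟨j, Or.inl rfl⟩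

private lemma Cc_mem_wheel (k : ℕ) (j : ZMod k) : Cc k j ∈ wheelEdges k := ⟨j, Or.inr rfl⟩

private lemma zmodTwoNe {k : ℕ} (hk : 3 ≤ k) : (2 : ZMod k) ≠ 0 := by
  intro h
  have h2 : ((2 : ℕ) : ZMod k) = 0 := by exact_mod_cast h
  rw [ZMod.natCast_eq_zero_iff] at h2
  have := Nat.le_of_dvd (by norm_num) h2
  omega

private lemma zmodOneNe {k : ℕ} (hk : 3 ≤ k) : (1 : ZMod k) ≠ 0 := by
  intro h
  have h2 : ((1 : ℕ) : ZMod k) = 0 := by exact_mod_cast h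
  rw [ZMod.natCast_eq_zero_iff] at h2
  have := Nat.le_of_dvd (by norm_num) h2
  omega

private lemma ne_add_one {k : ℕ} (hk : 3 ≤ k) (j : ZMod k) : j ≠ j + 1 := by
  intro h
  exact zmodOneNe hk (by linear_combination -h)

private lemma sub_ne_add {k : ℕ} (hk : 3 ≤ k) (j : ZMod k) : j - 1 ≠ j + 1 := by
  intro h
  exact zmodTwoNe hk (by linear_combination -h)

private lemma sub_add_eq {k : ℕ} (j : ZMod k) : j - 1 + 1 = j := by ring

/-- The three wheel edges incident to spoke `j`. -/
private lemma incident_triple {k : ℕ} {e : Sym2 (Option (ZMod k))}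
    (he : e ∈ wheelEdges k) (j : ZMod k) (hj : (some j : Option (ZMod k)) ∈ e) :
    e = Rr k j ∨ e = Cc k (j - 1) ∨ e = Cc k j := by
  obtain ⟨m, hm | hm⟩ := he
  · subst hm
    rw [Sym2.mem_iff] at hj
    rcases hj with hj | hj
    · exact absurd hj (by simp)
    · left; rw [Option.some_inj] at hj; rw [Rr, hj]
  · subst hm
    rw [Sym2.mem_iff] at hj
    rcases hj with hj | hj
    · rw [Option.some_inj] at hj; right; right; rw [Cc, hj]
    · rw [Option.some_inj] at hj
      right; left
      have hm : m = j - 1 := by rw [hj]; ring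
      rw [Cc, ← hm]

open scoped Classical in
private lemma val_eq {k : ℕ} (hk : 3 ≤ k) {T : Set (Sym2 (Option (ZMod k)))}
    (hsub : T ⊆ wheelEdges k) (j : ZMod k) :
    valOf T (some j) = (if Rr k j ∈ T then 1 else 0) + (if Cc k (j - 1) ∈ T then 1 else 0)
      + (if Cc k j ∈ T then 1 else 0) := by
  have hset : {e ∈ T | (some j : Option (ZMod k)) ∈ e}
      = T ∩ {Rr k j, Cc k (j - 1), Cc k j} := by
    ext e
    constructor
    · rintro ⟨heT, hj⟩
      exact ⟨heT, incident_triple (hsub heT) j hj⟩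
    · rintro ⟨heT, he⟩
      refine ⟨heT, ?_⟩
      rcases he with h | h | h <;> subst h
      · exact Sym2.mem_mk_right _ _
      · rw [Cc, sub_add_eq]; exact Sym2.mem_mk_right _ _
      · exact Sym2.mem_mk_left _ _
  rw [valOf, hset]
  refine ncard_inter_triple _ _ _ _ ?_ ?_ ?_
  · rw [Rr, Cc, sub_add_eq]; simp [Sym2.eq_iff]
  · rw [Rr, Cc]; simp [Sym2.eq_iff]
  · rw [Cc, Cc, sub_add_eq]
    intro h
    rw [Sym2.eq_iff] at h
    rcases h with ⟨h1, h2⟩ | ⟨h1, h2⟩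
    · exact ne_add_one hk j (Option.some_inj.mp h2)
    · exact sub_ne_add hk j (Option.some_inj.mp h1)

/-- Possible neighbours of a spoke in a subgraph of the wheel. -/
private lemma adj_cases {k : ℕ} {T : Set (Sym2 (Option (ZMod k)))}
    (hsub : T ⊆ wheelEdges k) {j : ZMod k} {w : Option (ZMod k)}
    (h : (SimpleGraph.fromEdgeSet T).Adj (some j) w) :
    (w = none ∧ Rr k j ∈ T) ∨ (w = some (j - 1) ∧ Cc k (j - 1) ∈ T)
      ∨ (w = some (j + 1) ∧ Cc k j ∈ T) := by
  rw [SimpleGraph.fromEdgeSet_adj] at h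
  obtain ⟨hmem, hne⟩ := h
  have h3 := incident_triple (hsub hmem) j (Sym2.mem_mk_left _ _)
  rcases h3 with h | h | h
  · rw [Rr, Sym2.eq_iff] at h
    rcases h with ⟨h1, h2⟩ | ⟨h1, h2⟩
    · exact absurd h1 (by simp)
    · left
      refine ⟨h2, ?_⟩
      rw [← Option.some_inj.mp h1] at hmem ⊢
      rwa [Rr, ← h2, Sym2.eq_swap]
  · rw [Cc, sub_add_eq, Sym2.eq_iff] at h
    rcases h with ⟨h1, h2⟩ | ⟨h1, h2⟩
    · exact absurd h2.symm hne
    · right; left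
      refine ⟨h2, ?_⟩
      rw [Cc, sub_add_eq, ← h1, ← h2, Sym2.eq_swap]
      exact hmem
  · rw [Cc, Sym2.eq_iff] at h
    rcases h with ⟨h1, h2⟩ | ⟨h1, h2⟩
    · right; right
      refine ⟨h2, ?_⟩
      rw [Cc, ← h1, ← h2]
      exact hmem
    · exact absurd h2.symm hne

/-- No closed set of spokes avoiding the hub in a connected subgraph. -/
private lemma disconn {k : ℕ} {T : Set (Sym2 (Option (ZMod k)))}
    (hconn : (SimpleGraph.fromEdgeSet T).Connected) {S : Set (Option (ZMod k))}
    (hnone : (none : Option (ZMod k)) ∉ S) {u : Option (ZMod k)} (hu : u ∈ S)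
    (hclosed : ∀ u ∈ S, ∀ w, (SimpleGraph.fromEdgeSet T).Adj u w → w ∈ S) : False := by
  obtain ⟨p⟩ := hconn.preconnected u none
  exact hnone (walk_closed hclosed p hu)

private lemma val_two_of_not_right {k : ℕ} (hk : 3 ≤ k) {T : Set (Sym2 (Option (ZMod k)))}
    (hsub : T ⊆ wheelEdges k) {j : ZMod k} (h : valOf T (some j) = 2)
    (hc : Cc k j ∉ T) : Rr k j ∈ T ∧ Cc k (j - 1) ∈ T := by
  classical
  rw [val_eq hk hsub j, if_neg hc] at h
  split_ifs at h with h1 h2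
  · exact ⟨h1, h2⟩
  all_goals omega

private lemma val_two_of_not_left {k : ℕ} (hk : 3 ≤ k) {T : Set (Sym2 (Option (ZMod k)))}
    (hsub : T ⊆ wheelEdges k) {j : ZMod k} (h : valOf T (some j) = 2)
    (hc : Cc k (j - 1) ∉ T) : Rr k j ∈ T ∧ Cc k j ∈ T := by
  classical
  rw [val_eq hk hsub j, if_neg hc] at h
  split_ifs at h with h1 h2
  · exact ⟨h1, h2⟩
  all_goals omega

private lemma val_add_val_compl {k : ℕ} (hk : 3 ≤ k) {T : Set (Sym2 (Option (ZMod k)))}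
    (hsub : T ⊆ wheelEdges k) (j : ZMod k) :
    valOf T (some j) + valOf (wheelEdges k \ T) (some j) = 3 := by
  classical
  rw [val_eq hk hsub j, val_eq hk Set.diff_subset j]
  have hR := Rr_mem_wheel k j
  have hC1 := Cc_mem_wheel k (j - 1)
  have hC2 := Cc_mem_wheel k j
  by_cases h1 : Rr k j ∈ T <;> by_cases h2 : Cc k (j - 1) ∈ T <;>
    by_cases h3 : Cc k j ∈ T <;>
    simp [Set.mem_diff, h1, h2, h3, hR, hC1, hC2]

private lemma chordCore {k : ℕ} (hk : 3 ≤ k) {T : Set (Sym2 (Option (ZMod k)))}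
    (hT : IsCoupledTree k T) (i : ZMod k) (h1 : valOf T (some i) = 2)
    (h2 : valOf T (some (i + 1)) = 2) : Cc k i ∈ T := by
  obtain ⟨hsub, htree, htree'⟩ := hT
  by_contra hc
  have hv1 := val_two_of_not_right hk hsub h1 hc
  have hc' : Cc k ((i + 1) - 1) ∉ T := by rw [show (i + 1) - 1 = i by ring]; exact hc
  have hv2 := val_two_of_not_left hk hsub h2 hc'
  have hd : ∀ e ∈ T, e ∉ wheelEdges k \ T := fun e he h' => h'.2 he
  have hsub' : wheelEdges k \ T ⊆ wheelEdges k := Set.diff_subset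
  refine disconn htree'.isConnected (S := {some i, some (i + 1)}) (by simp)
    (u := some i) (by simp) ?_
  rintro u hu w hadj
  simp only [Set.mem_insert_iff, Set.mem_singleton_iff] at hu
  rcases hu with rfl | rfl
  · rcases adj_cases hsub' hadj with ⟨hw, hm⟩ | ⟨hw, hm⟩ | ⟨hw, hm⟩
    · exact absurd hm (hd _ hv1.1)
    · exact absurd hm (hd _ hv1.2)
    · simp [hw]
  · rcases adj_cases hsub' hadj with ⟨hw, hm⟩ | ⟨hw, hm⟩ | ⟨hw, hm⟩
    · exact absurd hm (hd _ hv2.1)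
    · rw [show (i + 1) - 1 = i by ring] at hw; simp [hw]
    · exact absurd hm (hd _ hv2.2)

private lemma radiusCore {k : ℕ} (hk : 3 ≤ k) {T : Set (Sym2 (Option (ZMod k)))}
    (hT : IsCoupledTree k T) (i : ZMod k) (h1 : valOf T (some (i - 1)) = 2)
    (h2 : valOf T (some (i + 1)) = 2) : Rr k i ∉ T := by
  obtain ⟨hsub, htree, htree'⟩ := hT
  intro hr
  have hd : ∀ e ∈ T, e ∉ wheelEdges k \ T := fun e he h' => h'.2 he
  have hsub' : wheelEdges k \ T ⊆ wheelEdges k := Set.diff_subset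
  have hii : ((i + 1) - 1 : ZMod k) = i := by ring
  by_cases hc1 : Cc k (i - 1) ∈ T <;> by_cases hc2 : Cc k i ∈ T
  · -- all three edges at spoke i lie in T : spoke i is isolated in the complement
    refine disconn htree'.isConnected (S := {some i}) (by simp) (u := some i) (by simp) ?_
    rintro u hu w hadj
    simp only [Set.mem_singleton_iff] at hu
    subst hu
    rcases adj_cases hsub' hadj with ⟨hw, hm⟩ | ⟨hw, hm⟩ | ⟨hw, hm⟩
    · exact absurd hm (hd _ hr)
    · exact absurd hm (hd _ hc1)
    · exact absurd hm (hd _ hc2)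
  · -- chord to the right missing : pair {i, i+1} is closed in the complement
    have hc' : Cc k ((i + 1) - 1) ∉ T := by rw [hii]; exact hc2
    have hv2 := val_two_of_not_left hk hsub h2 hc'
    refine disconn htree'.isConnected (S := {some i, some (i + 1)}) (by simp)
      (u := some i) (by simp) ?_
    rintro u hu w hadj
    simp only [Set.mem_insert_iff, Set.mem_singleton_iff] at hu
    rcases hu with rfl | rfl
    · rcases adj_cases hsub' hadj with ⟨hw, hm⟩ | ⟨hw, hm⟩ | ⟨hw, hm⟩
      · exact absurd hm (hd _ hr)
      · exact absurd hm (hd _ hc1)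
      · simp [hw]
    · rcases adj_cases hsub' hadj with ⟨hw, hm⟩ | ⟨hw, hm⟩ | ⟨hw, hm⟩
      · exact absurd hm (hd _ hv2.1)
      · rw [hii] at hw; simp [hw]
      · exact absurd hm (hd _ hv2.2)
  · -- chord to the left missing : pair {i-1, i} is closed in the complement
    have hv1 := val_two_of_not_right hk hsub h1 hc1
    refine disconn htree'.isConnected (S := {some (i - 1), some i}) (by simp)
      (u := some i) (by simp) ?_
    rintro u hu w hadj
    simp only [Set.mem_insert_iff, Set.mem_singleton_iff] at hu
    rcases hu with rfl | rfl
    · rcases adj_cases hsub' hadj with ⟨hw, hm⟩ | ⟨hw, hm⟩ | ⟨hw, hm⟩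
      · exact absurd hm (hd _ hv1.1)
      · exact absurd hm (hd _ hv1.2)
      · rw [sub_add_eq] at hw; simp [hw]
    · rcases adj_cases hsub' hadj with ⟨hw, hm⟩ | ⟨hw, hm⟩ | ⟨hw, hm⟩
      · exact absurd hm (hd _ hr)
      · simp [hw]
      · exact absurd hm (hd _ hc2)
  · -- both chords missing : triple {i-1, i, i+1} is closed in the complement
    have hv1 := val_two_of_not_right hk hsub h1 hc1
    have hc' : Cc k ((i + 1) - 1) ∉ T := by rw [hii]; exact hc2
    have hv2 := val_two_of_not_left hk hsub h2 hc'
    refine disconn htree'.isConnected (S := {some (i - 1), some i, some (i + 1)}) (by simp)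
      (u := some i) (by simp) ?_
    rintro u hu w hadj
    simp only [Set.mem_insert_iff, Set.mem_singleton_iff] at hu
    rcases hu with rfl | rfl | rfl
    · rcases adj_cases hsub' hadj with ⟨hw, hm⟩ | ⟨hw, hm⟩ | ⟨hw, hm⟩
      · exact absurd hm (hd _ hv1.1)
      · exact absurd hm (hd _ hv1.2)
      · rw [sub_add_eq] at hw; simp [hw]
    · rcases adj_cases hsub' hadj with ⟨hw, hm⟩ | ⟨hw, hm⟩ | ⟨hw, hm⟩
      · exact absurd hm (hd _ hr)
      · simp [hw]
      · simp [hw]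
    · rcases adj_cases hsub' hadj with ⟨hw, hm⟩ | ⟨hw, hm⟩ | ⟨hw, hm⟩
      · exact absurd hm (hd _ hv2.1)
      · rw [hii] at hw; simp [hw]
      · exact absurd hm (hd _ hv2.2)

private lemma coupled_compl {k : ℕ} {T : Set (Sym2 (Option (ZMod k)))}
    (hT : IsCoupledTree k T) : IsCoupledTree k (wheelEdges k \ T) := by
  obtain ⟨hsub, htree, htree'⟩ := hT
  refine ⟨Set.diff_subset, htree', ?_⟩
  rwa [Set.diff_diff_cancel_left hsub]

theorem stmt4 (k : ℕ) (hk : 3 ≤ k) (T : Set (Sym2 (Option (ZMod k))))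
    (hT : IsCoupledTree k T) (i : ZMod k) :
    (valOf T (some i) = 2 → valOf T (some (i + 1)) = 2 →
      s(some i, some (i + 1)) ∈ T) ∧
    (valOf T (some i) = 1 → valOf T (some (i + 1)) = 1 →
      s(some i, some (i + 1)) ∉ T) ∧
    (valOf T (some (i - 1)) = 2 → valOf T (some (i + 1)) = 2 →
      s(none, some i) ∉ T) ∧
    (valOf T (some (i - 1)) = 1 → valOf T (some (i + 1)) = 1 →
      s(none, some i) ∈ T) := by
  have hsub := hT.1
  have hT' := coupled_compl hT
  refine ⟨fun h1 h2 => chordCore hk hT i h1 h2, fun h1 h2 hmem => ?_, ?_, fun h1 h2 => ?_⟩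
  · have s1 := val_add_val_compl hk hsub i
    have s2 := val_add_val_compl hk hsub (i + 1)
    have h1' : valOf (wheelEdges k \ T) (some i) = 2 := by omega
    have h2' : valOf (wheelEdges k \ T) (some (i + 1)) = 2 := by omega
    exact (chordCore hk hT' i h1' h2').2 hmem
  · exact fun h1 h2 => radiusCore hk hT i h1 h2
  · have s1 := val_add_val_compl hk hsub (i - 1)
    have s2 := val_add_val_compl hk hsub (i + 1)
    have h1' : valOf (wheelEdges k \ T) (some (i - 1)) = 2 := by omega
    have h2' : valOf (wheelEdges k \ T) (some (i + 1)) = 2 := by omega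
    by_contra hmem
    exact radiusCore hk hT' i h1' h2' ⟨Rr_mem_wheel k i, hmem⟩
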